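/- arXiv:1204.1086 — 3 statements merged into one kernel-verified Lean document; each statement's English description precedes it below -/
import Mathlib

section
/- Let s ≥ 3 and let γ : ℕ → ℕ be a nondecreasing function such that λ_{s−2}(n) ≤ γ(n)·n for all n ≥ 1. Then for all n ≥ 1: λ_s(n) ≤ γ(n)·λ_s(n, 2n−1). -/
/-!
Cut a 2-sparse order-`s` sequence `S` over `n` symbols into segments, a new segment starting
at every first occurrence of a symbol and right after every last occurrence of one; there are at
most `2n − 1` segments. A symbol of a segment occurs before it unless it is the segment's first
symbol, and after it unless it is the segment's last one, so an alternation of length `s` inside a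
segment extends to one of length `s + 2` in `S`. Hence each segment is an order-`(s − 2)` sequence,
and its length is at most `γ(n)` times its number of distinct symbols. Replacing each segment by
its distinct symbols leaves a subsequence of `S` made of at most `2n − 1` blocks, of length at
most `λ_s(n, 2n − 1)`.
-/

/-- Alternating list `a b a b ⋯` of the given length. -/
def altList : ℕ → ℕ → ℕ → List ℕ
  | 0, _, _ => []
  | (k+1), a, b => a :: altList k b a

/-- An order-`s` Davenport–Schinzel sequence: it contains no (not necessarily
contiguous) subsequence `a b a b ⋯` of length `s+2` over two distinct symbols. -/
def IsDS (s : ℕ) (S : List ℕ) : Prop :=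
  ∀ a b : ℕ, a ≠ b → ¬ (altList (s + 2) a b).Sublist S

/-- 2-sparse: no two equal adjacent symbols. -/
def Sparse2 (S : List ℕ) : Prop := S.Chain' (· ≠ ·)

/-- `S` can be partitioned into at most `m` blocks
(contiguous runs of pairwise distinct symbols). -/
def Blocked (m : ℕ) (S : List ℕ) : Prop :=
  ∃ Bs : List (List ℕ), Bs.length ≤ m ∧ (∀ B ∈ Bs, B.Nodup) ∧ S = Bs.flatten

/-- `λ_s(n)`: maximum length of a 2-sparse order-`s` DS sequence over an
alphabet of `n` symbols. -/
noncomputable def lamS (s n : ℕ) : ℕ :=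
  sSup {l : ℕ | ∃ S : List ℕ, IsDS s S ∧ Sparse2 S ∧ S.toFinset.card ≤ n ∧ S.length = l}

/-- `λ_s(n,m)`: maximum length of an order-`s` DS sequence over an alphabet of
`n` symbols that can be partitioned into at most `m` blocks. -/
noncomputable def lamB (s n m : ℕ) : ℕ :=
  sSup {l : ℕ | ∃ S : List ℕ, IsDS s S ∧ S.toFinset.card ≤ n ∧ Blocked m S ∧ S.length = l}

open List

section Lists

variable {α : Type*}

lemma List.Sublist.of_sublist_cons_of_head?_ne {l m : List α} {b : α} (h : l <+ b :: m)
    (hb : l.head? ≠ some b) : l <+ m := by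
  rcases sublist_cons_iff.1 h with h | ⟨r, rfl, -⟩
  · exact h
  · simp at hb

lemma cons_sublist_of_head {A I B l : List α} {b : α}
    (hA : ∀ y ∈ I, y ∉ A → I.head? = some y) (hb : b ∈ I) (hl : l <+ I ++ B)
    (hne : l.head? ≠ some b) : b :: l <+ A ++ I ++ B := by
  by_cases hbA : b ∈ A
  · rw [append_assoc]
    exact (singleton_sublist.2 hbA).append hl
  · obtain ⟨I', rfl⟩ : ∃ I', I = b :: I' := by
      cases I with
      | nil => simp at hb
      | cons c I' => obtain rfl := Option.some.inj (hA b hb hbA); exact ⟨I', rfl⟩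
    rw [append_assoc]
    exact ((hl.of_sublist_cons_of_head?_ne hne).cons_cons b).trans (sublist_append_right _ _)

lemma append_singleton_sublist_of_getLast {A I B l : List α} {w : α}
    (hB : ∀ y ∈ I, y ∉ B → I.getLast? = some y) (hw : w ∈ I) (hl : l <+ A ++ I)
    (hne : l.getLast? ≠ some w) : l ++ [w] <+ A ++ I ++ B := by
  rw [← reverse_sublist]
  simpa using cons_sublist_of_head (A := B.reverse) (I := I.reverse) (B := A.reverse)
    (by simpa using hB) (mem_reverse.2 hw) (by simpa using reverse_sublist.2 hl) (by simpa using hne)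

variable [DecidableEq α]

lemma List.Subset.card_toFinset_le {l m : List α} (h : l ⊆ m) :
    l.toFinset.card ≤ m.toFinset.card :=
  Finset.card_le_card fun _ hy => mem_toFinset.2 (h (mem_toFinset.1 hy))

lemma flatten_map_dedup_sublist (Is : List (List α)) : (Is.map dedup).flatten <+ Is.flatten := by
  induction Is with
  | nil => exact Sublist.refl _
  | cons I Is ih => exact (dedup_sublist I).append ih

end Lists

lemma altList_head?_ne {a b : ℕ} (hab : a ≠ b) (k : ℕ) : (altList k a b).head? ≠ some b := by
  cases k <;> simp [altList, hab]

lemma altList_sublist_altList {k m : ℕ} (h : k ≤ m) (a b : ℕ) : altList k a b <+ altList m a b := by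
  induction k generalizing m a b with
  | zero => exact nil_sublist _
  | succ k ih =>
    obtain ⟨m, rfl⟩ := Nat.exists_eq_add_of_lt h
    exact (ih (by omega) b a).cons_cons a

lemma altList_succ_eq_append {a b : ℕ} (hab : a ≠ b) (k : ℕ) :
    ∃ w ∈ [a, b], altList (k + 2) a b = altList (k + 1) a b ++ [w] ∧
      (altList (k + 1) a b).getLast? ≠ some w := by
  induction k generalizing a b with
  | zero => exact ⟨b, by simp, rfl, by simp [altList, hab]⟩
  | succ k ih =>
    obtain ⟨w, hw, heq, hlast⟩ := ih (Ne.symm hab)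
    refine ⟨w, by simp_all [or_comm], ?_, ?_⟩
    · change a :: altList (k + 2) b a = a :: altList (k + 1) b a ++ [w]
      rw [heq, cons_append]
    · change (a :: b :: altList k a b).getLast? ≠ some w
      rwa [getLast?_cons_cons]

lemma altList_two_mul_sublist {u v : ℕ} (huv : u ≠ v) :
    ∀ (k : ℕ) (S : List ℕ), k ≤ (S.zip S.tail).count (u, v) → altList (2 * k) u v <+ S
  | 0, _, _ => nil_sublist _
  | k + 1, [], h => by simp at h
  | k + 1, [_], h => by simp at h
  | k + 1, x :: y :: T, h => by
    by_cases hxy : (x, y) = (u, v)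
    · obtain ⟨rfl, rfl⟩ := Prod.mk.inj hxy
      have ih := altList_two_mul_sublist huv k (y :: T) (by simpa using h)
      exact ((ih.of_sublist_cons_of_head?_ne (altList_head?_ne huv _)).cons_cons y).cons_cons x
    · have ih := altList_two_mul_sublist huv (k + 1) (y :: T) (by simpa [count_cons, hxy] using h)
      exact ih.cons x

lemma IsDS.sublist {s : ℕ} {S T : List ℕ} (h : IsDS s S) (hTS : T <+ S) : IsDS s T :=
  fun a b hab hsub => h a b hab (hsub.trans hTS)

lemma isDS_nil (s : ℕ) : IsDS s [] := by
  intro a b _ h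
  simpa [altList] using sublist_nil.1 h

def FirstLastAtEnds (A I B : List ℕ) : Prop :=
  (∀ y ∈ I, y ∉ A → I.head? = some y) ∧ (∀ y ∈ I, y ∉ B → I.getLast? = some y)

/-- An alternation inside `I` extends by one symbol on either side within `A ++ I ++ B`. -/
lemma FirstLastAtEnds.isDS {t : ℕ} {A I B : List ℕ} (hI : FirstLastAtEnds A I B)
    (hDS : IsDS (t + 2) (A ++ I ++ B)) : IsDS t I := by
  intro a b hab hsub
  have ha : a ∈ I := hsub.subset (by simp [altList])
  have hb : b ∈ I := hsub.subset (by simp [altList])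
  have hleft : b :: altList (t + 2) a b <+ A ++ I := by
    simpa using cons_sublist_of_head (B := []) hI.1 hb (by simpa using hsub)
      (altList_head?_ne hab _)
  obtain ⟨w, hw, heq, hlast⟩ := altList_succ_eq_append (Ne.symm hab) (t + 2)
  refine hDS b a (Ne.symm hab) ?_
  rw [heq]
  exact append_singleton_sublist_of_getLast hI.2 (by simp at hw; rcases hw with rfl | rfl <;> assumption)
    hleft hlast

lemma FirstLastAtEnds.cons {P J R : List ℕ} {x y : ℕ} (h : FirstLastAtEnds (P ++ [x]) (y :: J) R)
    (hy : y ∈ P ++ [x]) (hx : x ∈ y :: J ++ R) : FirstLastAtEnds P (x :: y :: J) R := by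
  constructor
  · intro z hz hzP
    rcases mem_cons.1 hz with rfl | hz
    · rfl
    by_cases hzx : z = x
    · rw [hzx]; rfl
    · obtain rfl : y = z := Option.some.inj (h.1 z hz (by simp [hzP, hzx]))
      simp [hzP, hzx] at hy
  · intro z hz hzR
    rw [getLast?_cons_cons]
    rcases mem_cons.1 hz with rfl | hz
    · exact h.2 z (by simpa [hzR] using hx) hzR
    · exact h.2 z hz hzR

def IsSegmentation : List ℕ → List (List ℕ) → Prop
  | _, [] => True
  | P, I :: Is => FirstLastAtEnds P I Is.flatten ∧ IsSegmentation (P ++ I) Is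

lemma IsSegmentation.exists_context {P : List ℕ} {Is : List (List ℕ)} (h : IsSegmentation P Is)
    {I : List ℕ} (hI : I ∈ Is) : ∃ A B, A ++ I ++ B = P ++ Is.flatten ∧ FirstLastAtEnds A I B := by
  induction Is generalizing P with
  | nil => simp at hI
  | cons J Is ih =>
    rcases mem_cons.1 hI with rfl | hI
    · exact ⟨P, _, by simp, h.1⟩
    · obtain ⟨A, B, hAB, hA⟩ := ih h.2 hI
      exact ⟨A, B, by simp [hAB], hA⟩

/-- Bounds the number of segments of `x :: T`: a segment boundary sits at the first occurrence of
a symbol that is neither `x` nor in `P`, or just after the last occurrence of a symbol. -/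
def segmentBound (P : List ℕ) (x : ℕ) (T : List ℕ) : ℕ :=
  ((x :: T).toFinset \ insert x P.toFinset).card + (x :: T).toFinset.card

lemma segmentBound_nil (x : ℕ) (T : List ℕ) :
    segmentBound [] x T = 2 * (x :: T).toFinset.card - 1 := by
  have hx : x ∈ (x :: T).toFinset := by simp
  have := Finset.card_pos.2 ⟨x, hx⟩
  rw [segmentBound, toFinset_nil, insert_empty_eq, Finset.sdiff_singleton_eq_erase,
    Finset.card_erase_of_mem hx]
  omega

lemma toFinset_sdiff_insert_subset (P U : List ℕ) (x y : ℕ) :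
    (y :: U).toFinset \ insert y (P ++ [x]).toFinset ⊆
      (x :: y :: U).toFinset \ insert x P.toFinset := by
  intro z
  simp +contextual

lemma segmentBound_cons_le (P U : List ℕ) (x y : ℕ) :
    segmentBound (P ++ [x]) y U ≤ segmentBound P x (y :: U) :=
  add_le_add (Finset.card_le_card (toFinset_sdiff_insert_subset P U x y))
    (Finset.card_le_card (by simp [Finset.subset_insert]))

lemma segmentBound_cons_lt {P U : List ℕ} {x y : ℕ} (h : y ∉ P ++ [x] ∨ x ∉ y :: U) :
    segmentBound (P ++ [x]) y U < segmentBound P x (y :: U) := by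
  have hsub := toFinset_sdiff_insert_subset P U x y
  have hsymb : (y :: U).toFinset ⊆ (x :: y :: U).toFinset := by simp [Finset.subset_insert]
  rcases h with hy | hx
  · exact add_lt_add_of_lt_of_le
      (Finset.card_lt_card ((Finset.ssubset_iff_of_subset hsub).2 ⟨y, by simp_all, by simp⟩))
      (Finset.card_le_card hsymb)
  · exact add_lt_add_of_le_of_lt (Finset.card_le_card hsub)
      (Finset.card_lt_card ((Finset.ssubset_iff_of_subset hsymb).2 ⟨x, by simp, by simpa using hx⟩))

lemma exists_isSegmentation (P : List ℕ) (x : ℕ) (T : List ℕ) :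
    ∃ Is : List (List ℕ), Is.flatten = x :: T ∧ [] ∉ Is ∧ IsSegmentation P Is ∧
      Is.length ≤ segmentBound P x T := by
  induction T generalizing P x with
  | nil => exact ⟨[[x]], by simp, by simp, ⟨by simp [FirstLastAtEnds], trivial⟩, by simp [segmentBound]⟩
  | cons y U ih =>
    obtain ⟨Js, hflat, hnil, hseg, hlen⟩ := ih (P ++ [x]) y
    rcases Js with _ | ⟨_ | ⟨z, J⟩, Js⟩
    · simp at hflat
    · simp at hnil
    obtain ⟨rfl, hJ⟩ : y = z ∧ J ++ Js.flatten = U := by simpa [eq_comm] using hflat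
    by_cases hmerge : y ∈ P ++ [x] ∧ x ∈ y :: U
    · refine ⟨(x :: y :: J) :: Js, by simp [hJ], by simpa using hnil,
        ⟨hseg.1.cons hmerge.1 (by simpa [← hJ] using hmerge.2), by simpa using hseg.2⟩, ?_⟩
      exact hlen.trans (segmentBound_cons_le P U x y)
    · refine ⟨[x] :: (y :: J) :: Js, by simp [hJ], by simpa using hnil,
        ⟨by simp [FirstLastAtEnds], hseg⟩, ?_⟩
      exact Nat.succ_le_of_lt (hlen.trans_lt (segmentBound_cons_lt (not_and_or.1 hmerge)))

lemma Sparse2.fst_ne_snd {S : List ℕ} (hS : Sparse2 S) {p : ℕ × ℕ} (hp : p ∈ S.zip S.tail) :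
    p.1 ≠ p.2 := by
  induction S with
  | nil => simp at hp
  | cons x T ih =>
    cases T with
    | nil => simp at hp
    | cons y U =>
      obtain ⟨hxy, hS⟩ := isChain_cons_cons.1 hS
      rcases mem_cons.1 hp with rfl | hp
      · exact hxy
      · exact ih hS hp

/-- Each of the at most `n * n` pairs `(u, v)` is adjacent in `S` at most `t` times, since `t + 1`
adjacencies yield `u v u v ⋯` of length `2 t + 2`. -/
lemma length_le_of_isDS_of_sparse2 {t n : ℕ} {S : List ℕ} (hDS : IsDS t S) (hS : Sparse2 S)
    (hcard : S.toFinset.card ≤ n) : S.length ≤ n * n * t + 1 := by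
  set L := S.zip S.tail
  have hcount : ∀ p ∈ L.dedup, L.count p ≤ t := by
    intro p hp
    by_contra! hlt
    have hne := hS.fst_ne_snd (mem_dedup.1 hp)
    exact hDS p.1 p.2 hne
      ((altList_sublist_altList (by omega) _ _).trans (altList_two_mul_sublist hne (t + 1) S hlt))
  have hL : L.length ≤ L.dedup.length * t := by
    rw [← sum_map_count_dedup_eq_length]
    -- the lemma above counts with the `BEq` instance derived from `DecidableEq`
    rw [lawful_beq_subsingleton instBEqOfDecidableEq instBEqProd]
    simpa using sum_le_card_nsmul (L.dedup.map fun p => L.count p) t (forall_mem_map.2 hcount)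
  have hpairs : L.dedup.length ≤ n * n := by
    rw [← card_toFinset]
    calc L.toFinset.card ≤ (S.toFinset ×ˢ S.toFinset).card := Finset.card_le_card fun p hp => by
          obtain ⟨h1, h2⟩ := of_mem_zip (mem_toFinset.1 hp)
          exact Finset.mem_product.2 ⟨mem_toFinset.2 h1, mem_toFinset.2 (mem_of_mem_tail h2)⟩
      _ ≤ n * n := by rw [Finset.card_product]; exact Nat.mul_le_mul hcard hcard
  have hLS : L.length = S.length - 1 := by simp [L]
  have := Nat.mul_le_mul_right t hpairs
  omega

lemma le_lamS {t n : ℕ} {S : List ℕ} (hDS : IsDS t S) (hS : Sparse2 S)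
    (hcard : S.toFinset.card ≤ n) : S.length ≤ lamS t n := by
  refine le_csSup ⟨n * n * t + 1, ?_⟩ ⟨S, hDS, hS, hcard, rfl⟩
  rintro _ ⟨S, hDS, hS, hcard, rfl⟩
  exact length_le_of_isDS_of_sparse2 hDS hS hcard

lemma Blocked.length_le {m n : ℕ} {S : List ℕ} (hS : Blocked m S) (hcard : S.toFinset.card ≤ n) :
    S.length ≤ m * n := by
  obtain ⟨Bs, hm, hBs, rfl⟩ := hS
  rw [length_flatten]
  refine (sum_le_card_nsmul _ n fun k hk => ?_).trans ?_
  · obtain ⟨B, hB, rfl⟩ := mem_map.1 hk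
    rw [← toFinset_card_of_nodup (hBs B hB)]
    exact (Finset.card_le_card fun y hy => by simpa using ⟨B, hB, by simpa using hy⟩).trans hcard
  · simpa using Nat.mul_le_mul_right n hm

lemma le_lamB {s n m : ℕ} {S : List ℕ} (hDS : IsDS s S) (hcard : S.toFinset.card ≤ n)
    (hS : Blocked m S) : S.length ≤ lamB s n m := by
  refine le_csSup ⟨m * n, ?_⟩ ⟨S, hDS, hcard, hS, rfl⟩
  rintro _ ⟨S, -, hcard, hS, rfl⟩
  exact hS.length_le hcard

lemma FirstLastAtEnds.length_le_mul {t n : ℕ} {γ : ℕ → ℕ} (hγ : Monotone γ)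
    (h : ∀ k, 1 ≤ k → lamS t k ≤ γ k * k) {A I B : List ℕ} (hI : FirstLastAtEnds A I B)
    (hDS : IsDS (t + 2) (A ++ I ++ B)) (hS : Sparse2 I) (hcard : I.toFinset.card ≤ n) :
    I.length ≤ γ n * I.dedup.length := by
  rcases Nat.eq_zero_or_pos I.toFinset.card with h0 | hpos
  · simp_all
  calc I.length ≤ lamS t I.toFinset.card := le_lamS (hI.isDS hDS) hS le_rfl
    _ ≤ γ I.toFinset.card * I.toFinset.card := h _ hpos
    _ ≤ γ n * I.dedup.length := by rw [← card_toFinset]; exact Nat.mul_le_mul_right _ (hγ hcard)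

/-- For `s ≥ 3` and nondecreasing `γ` with `λ_{s−2}(n) ≤ γ(n)·n` for all `n ≥ 1`,
we have `λ_s(n) ≤ γ(n)·λ_s(n, 2n−1)` for all `n ≥ 1`. -/
theorem stmt5 (s : ℕ) (hs : 3 ≤ s) (γ : ℕ → ℕ) (hγ : Monotone γ)
    (h : ∀ n : ℕ, 1 ≤ n → lamS (s - 2) n ≤ γ n * n) :
    ∀ n : ℕ, 1 ≤ n → lamS s n ≤ γ n * lamB s n (2 * n - 1) := by
  obtain ⟨t, rfl⟩ : ∃ t, s = t + 2 := ⟨s - 2, by omega⟩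
  rw [Nat.add_sub_cancel] at h
  intro n _
  refine csSup_le ⟨0, [], isDS_nil _, isChain_nil, by simp, rfl⟩ ?_
  rintro _ ⟨_ | ⟨x, T⟩, hDS, hS, hcard, rfl⟩
  · simp
  obtain ⟨Is, hflat, -, hseg, hlen⟩ := exists_isSegmentation [] x T
  have hsub : (Is.map dedup).flatten <+ x :: T := hflat ▸ flatten_map_dedup_sublist Is
  have hblocks : (Is.map dedup).length ≤ 2 * n - 1 := by
    rw [length_map]
    exact hlen.trans (by rw [segmentBound_nil]; omega)
  have hsegment : ∀ I ∈ Is, I.length ≤ γ n * I.dedup.length := fun I hI => by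
    obtain ⟨A, B, hAB, hI⟩ := hseg.exists_context hI
    rw [nil_append, hflat] at hAB
    exact hI.length_le_mul hγ h (hAB ▸ hDS) (hS.infix ⟨A, B, hAB⟩)
      ((IsInfix.subset ⟨A, B, hAB⟩).card_toFinset_le.trans hcard)
  calc (x :: T).length = (Is.map length).sum := by rw [← hflat, length_flatten]
    _ ≤ (Is.map fun I => γ n * I.dedup.length).sum := sum_le_sum hsegment
    _ = γ n * ((Is.map dedup).flatten).length := by
      simp [length_flatten, sum_map_mul_left, Function.comp_def]
    _ ≤ γ n * lamB (t + 2) n (2 * n - 1) := Nat.mul_le_mul_left _ <|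
      le_lamB (hDS.sublist hsub) (hsub.subset.card_toFinset_le.trans hcard)
        ⟨_, hblocks, by simp [nodup_dedup], rfl⟩
end

section
/- Let s ≥ 3 and let γ_s, γ_{s−2} : ℕ → ℕ be nondecreasing functions such that λ_s(n) ≤ γ_s(n)·n and λ_{s−2}(n) ≤ γ_{s−2}(n)·n for all n ≥ 1. Then for all n ≥ 1: λ_s(n) ≤ γ_{s−2}(γ_s(n))·λ_s(n, 3n−1). -/
/-!
Cut a 2-sparse order-`s` sequence `S` over `n` symbols greedily into runs of first and last
occurrences and pieces of middle occurrences, each piece using at most `q = γ_s(n)` symbols and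
stopping before that bound only where a run begins. The symbols of a piece all occur on both sides
of it, so a piece is an order-`(s-2)` sequence and is at most `γ_{s-2}(q)` times longer than its
set of symbols. Shrinking every piece to its set of symbols and moving, inside each run, the first
occurrences ahead of the last ones gives an order-`s` sequence at least `|S| / γ_{s-2}(q)` long,
with one block per piece plus one. As the runs hold at most `2n` occurrences, every piece is full
or followed by a run, and `|S| ≤ q n`, there are at most `3n - 2` pieces.
-/

namespace DavenportSchinzel

@[simp] lemma altList_length (k a b : ℕ) : (altList k a b).length = k := by
  induction k generalizing a b with
  | zero => rfl
  | succ k ih => simp [altList, ih]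

lemma mem_altList {k a b x : ℕ} (h : x ∈ altList k a b) : x = a ∨ x = b := by
  induction k generalizing a b with
  | zero => simp [altList] at h
  | succ k ih =>
    rcases List.mem_cons.1 h with rfl | h
    · exact Or.inl rfl
    · exact (ih h).symm

lemma left_mem_altList {k : ℕ} (hk : 1 ≤ k) (a b : ℕ) : a ∈ altList k a b := by
  obtain ⟨k, rfl⟩ := Nat.exists_eq_add_of_le' hk
  exact List.mem_cons_self

lemma right_mem_altList {k : ℕ} (hk : 2 ≤ k) (a b : ℕ) : b ∈ altList k a b := by
  obtain ⟨k, rfl⟩ := Nat.exists_eq_add_of_le' hk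
  exact List.mem_cons_of_mem _ (left_mem_altList (by omega) b a)

lemma altList_isChain {a b : ℕ} (hab : a ≠ b) (k : ℕ) : (altList k a b).IsChain (· ≠ ·) := by
  induction k generalizing a b with
  | zero => exact List.isChain_nil
  | succ k ih =>
    cases k with
    | zero => exact List.isChain_singleton _
    | succ k => exact List.isChain_cons_cons.2 ⟨hab, ih hab.symm⟩

lemma altList_succ (k a b : ℕ) :
    ∃ e, (e = a ∨ e = b) ∧ altList (k + 1) a b = altList k a b ++ [e] := by
  induction k generalizing a b with
  | zero => exact ⟨a, Or.inl rfl, rfl⟩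
  | succ k ih =>
    obtain ⟨e, he, heq⟩ := ih b a
    exact ⟨e, he.symm, by rw [altList, heq]; rfl⟩

lemma altList_sublist_altList {k k' : ℕ} (h : k ≤ k') (a b : ℕ) :
    (altList k a b).Sublist (altList k' a b) := by
  induction h with
  | refl => exact List.Sublist.refl _
  | step _ ih =>
    obtain ⟨e, -, heq⟩ := altList_succ _ a b
    exact heq ▸ ih.trans (List.sublist_append_left _ _)

lemma IsDS.sublist {s : ℕ} {S T : List ℕ} (h : IsDS s S) (hTS : T.Sublist S) : IsDS s T :=
  fun a b hab hsub => h a b hab (hsub.trans hTS)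

lemma isDS_of_length_lt {s : ℕ} {S : List ℕ} (h : S.length < s + 2) : IsDS s S :=
  fun a b _ hsub => by simpa using (hsub.length_le.trans_lt h).ne

/-- An alternation `a b ⋯` of length `s` inside `V` extends to `b a b ⋯` of length `s + 2` inside
`U ++ V ++ W`, because both letters occur in `U` and in `W`. -/
lemma IsDS.of_mem_left_right {s : ℕ} (hs : 2 ≤ s) {U V W : List ℕ}
    (h : IsDS s (U ++ V ++ W)) (hV : ∀ x ∈ V, x ∈ U ∧ x ∈ W) : IsDS (s - 2) V := by
  intro a b hab hsub
  rw [Nat.sub_add_cancel hs] at hsub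
  have haV : a ∈ V := hsub.subset (left_mem_altList (by omega) a b)
  have hbV : b ∈ V := hsub.subset (right_mem_altList hs a b)
  obtain ⟨e, he, heq⟩ := altList_succ s a b
  have heW : e ∈ W := by rcases he with rfl | rfl <;> simp_all
  refine h b a hab.symm ?_
  show (b :: altList (s + 1) a b).Sublist _
  rw [heq, ← List.singleton_append, ← List.append_assoc]
  exact ((List.singleton_sublist.2 (hV b hbV).1).append hsub).append
    (List.singleton_sublist.2 heW)

def pairs : List ℕ → List (ℕ × ℕ)
  | a :: b :: t => (a, b) :: pairs t
  | _ => []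

lemma length_le_length_pairs : ∀ S : List ℕ, S.length ≤ 2 * (pairs S).length + 1
  | [] | [_] => by simp [pairs]
  | _ :: _ :: t => by simp [pairs]; have := length_le_length_pairs t; omega

lemma flatMap_pairs_sublist : ∀ S : List ℕ, ((pairs S).flatMap fun p => [p.1, p.2]).Sublist S
  | [] | [_] => by simp [pairs]
  | _ :: _ :: t => by simpa [pairs] using flatMap_pairs_sublist t

lemma flatMap_replicate_eq_altList (k a b : ℕ) :
    ((List.replicate k (a, b)).flatMap fun p => [p.1, p.2]) = altList (2 * k) a b := by
  induction k with
  | zero => rfl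
  | succ k ih => rw [List.replicate_succ, List.flatMap_cons, ih]; rfl

lemma mem_of_mem_pairs : ∀ {S : List ℕ} {x : ℕ × ℕ}, x ∈ pairs S → x.1 ∈ S ∧ x.2 ∈ S
  | [], _, h | [_], _, h => by simp [pairs] at h
  | a :: b :: t, x, h => by
    rcases List.mem_cons.1 h with rfl | h
    · simp
    · simp [mem_of_mem_pairs h]

lemma ne_of_mem_pairs : ∀ {S : List ℕ}, Sparse2 S → ∀ {x : ℕ × ℕ}, x ∈ pairs S → x.1 ≠ x.2
  | [], _, _, h | [_], _, _, h => by simp [pairs] at h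
  | a :: b :: t, hS, x, h => by
    obtain ⟨hab, hS⟩ := List.isChain_cons_cons.1 hS
    rcases List.mem_cons.1 h with rfl | h
    · exact hab
    · exact ne_of_mem_pairs hS.tail h

/-- Pigeonhole on `pairs S`: a pair `(a, b)` occurring `s + 1` times spells out `(a b)^(s+1)`. -/
lemma IsDS.length_le {s : ℕ} {S : List ℕ} (hds : IsDS s S) (hsp : Sparse2 S) :
    S.length ≤ 2 * (s * S.toFinset.card ^ 2) + 1 := by
  have hpairs : (pairs S).length ≤ (pairs S).toFinset.card * s := by
    rw [← List.sum_toFinset_count_eq_length]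
    refine Finset.sum_le_card_nsmul _ _ _ fun x hx => ?_
    by_contra! hlt
    -- the sum counts with the `DecidableEq` instance, not with the `BEq` instance of `ℕ × ℕ`
    have hrep := (@List.replicate_sublist_iff _ instBEqOfDecidableEq _ (s + 1) _ _).2 hlt
    refine hds x.1 x.2 (ne_of_mem_pairs hsp (List.mem_toFinset.1 hx)) ?_
    refine (altList_sublist_altList (k' := 2 * (s + 1)) (by omega) _ _).trans ?_
    rw [← flatMap_replicate_eq_altList]
    exact (hrep.flatMap _).trans (flatMap_pairs_sublist S)
  have hsub : (pairs S).toFinset ⊆ S.toFinset ×ˢ S.toFinset := fun x hx => by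
    simpa using mem_of_mem_pairs (List.mem_toFinset.1 hx)
  have := Finset.card_le_card hsub
  rw [Finset.card_product] at this
  have := length_le_length_pairs S
  nlinarith

lemma length_le_lamS {s n : ℕ} {S : List ℕ} (hds : IsDS s S) (hsp : Sparse2 S)
    (hn : S.toFinset.card ≤ n) : S.length ≤ lamS s n := by
  refine le_csSup ⟨2 * (s * n ^ 2) + 1, ?_⟩ ⟨S, hds, hsp, hn, rfl⟩
  rintro _ ⟨S, hds, hsp, hn, rfl⟩
  exact (IsDS.length_le hds hsp).trans (by gcongr)

lemma lamS_le {s n m : ℕ}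
    (h : ∀ S : List ℕ, IsDS s S → Sparse2 S → S.toFinset.card ≤ n → S.length ≤ m) :
    lamS s n ≤ m :=
  csSup_le ⟨0, [], isDS_of_length_lt (by simp), List.isChain_nil, by simp, rfl⟩
    (by rintro _ ⟨S, hds, hsp, hn, rfl⟩; exact h S hds hsp hn)

lemma one_le_lamS (s : ℕ) {n : ℕ} (hn : 1 ≤ n) : 1 ≤ lamS s n :=
  length_le_lamS (S := [0]) (isDS_of_length_lt (by simp)) (List.isChain_singleton _) (by simpa)

lemma Blocked.length_le {m n : ℕ} {S : List ℕ} (hS : Blocked m S) (hn : S.toFinset.card ≤ n) :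
    S.length ≤ m * n := by
  obtain ⟨Bs, hm, hnd, rfl⟩ := hS
  have hB : ∀ B ∈ Bs, B.length ≤ n := fun B hB => by
    rw [← List.toFinset_card_of_nodup (hnd B hB)]
    refine le_trans (Finset.card_le_card fun x hx => ?_) hn
    simpa using ⟨B, hB, List.mem_toFinset.1 hx⟩
  rw [List.length_flatten]
  calc (Bs.map List.length).sum ≤ Bs.length * n := by
        simpa using List.sum_le_card_nsmul (Bs.map List.length) n (by simpa using hB)
    _ ≤ m * n := Nat.mul_le_mul_right n hm

lemma length_le_lamB {s n m : ℕ} {S : List ℕ} (hds : IsDS s S) (hn : S.toFinset.card ≤ n)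
    (hS : Blocked m S) : S.length ≤ lamB s n m := by
  refine le_csSup ⟨m * n, ?_⟩ ⟨S, hds, hn, hS, rfl⟩
  rintro _ ⟨S, -, hn, hS, rfl⟩
  exact Blocked.length_le hS hn

lemma blocked_length (S : List ℕ) : Blocked S.length S :=
  ⟨S.map ([·]), by simp, by simp, by simp [← List.flatMap_def]⟩

lemma Blocked.mono {m m' : ℕ} {S : List ℕ} (hS : Blocked m S) (h : m ≤ m') : Blocked m' S :=
  let ⟨Bs, hm, hnd, hS⟩ := hS
  ⟨Bs, hm.trans h, hnd, hS⟩

lemma Sparse2.length_le_card {S : List ℕ} (hsp : Sparse2 S) (hS : S.toFinset.card ≤ 1) :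
    S.length ≤ S.toFinset.card := by
  match S, hsp with
  | [], _ | [_], _ => simp
  | a :: b :: t, hsp =>
    have hab : a ≠ b := (List.isChain_cons_cons.1 hsp).1
    have : ({a, b} : Finset ℕ).card ≤ 1 :=
      le_trans (Finset.card_le_card (by intro x; simp; tauto)) hS
    rw [Finset.card_pair hab] at this
    omega

lemma mem_of_isChain_ne {u v : ℕ} {w : List ℕ} (hw : w.IsChain (· ≠ ·))
    (huv : ∀ x ∈ w, x = u ∨ x = v) (h : 2 ≤ w.length) : u ∈ w ∧ v ∈ w := by
  match w, hw, h with
  | a :: b :: t, hw, _ =>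
    have hab := (List.isChain_cons_cons.1 hw).1
    have ha := huv a (by simp)
    have hb := huv b (by simp)
    constructor <;> rcases ha with rfl | rfl <;> rcases hb with rfl | rfl <;> simp_all

lemma length_le_two_of_nodup {u v : ℕ} {w : List ℕ} (hnd : w.Nodup)
    (huv : ∀ x ∈ w, x = u ∨ x = v) : w.length ≤ 2 := by
  rw [← List.toFinset_card_of_nodup hnd]
  exact (Finset.card_le_card fun x hx => by simpa using huv x (List.mem_toFinset.1 hx)).trans
    Finset.card_le_two

lemma length_le_one_of_disjoint {u v : ℕ} {w₁ w₂ : List ℕ} (hw : (w₁ ++ w₂).IsChain (· ≠ ·))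
    (huv : ∀ x ∈ w₁ ++ w₂, x = u ∨ x = v) (hdisj : w₁.Disjoint w₂) (h₁ : w₁ ≠ [])
    (h₂ : w₂ ≠ []) : w₁.length ≤ 1 ∧ w₂.length ≤ 1 := by
  obtain ⟨x₁, hx₁⟩ := List.exists_mem_of_ne_nil w₁ h₁
  obtain ⟨x₂, hx₂⟩ := List.exists_mem_of_ne_nil w₂ h₂
  have hu₁ : ∀ x ∈ w₁, x = u ∨ x = v := fun x hx => huv x (List.mem_append_left _ hx)
  have hu₂ : ∀ x ∈ w₂, x = u ∨ x = v := fun x hx => huv x (List.mem_append_right _ hx)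
  constructor <;> by_contra! hlen
  · obtain ⟨hu, hv⟩ := mem_of_isChain_ne (hw.infix (List.prefix_append _ _).isInfix) hu₁ hlen
    rcases hu₂ x₂ hx₂ with rfl | rfl
    exacts [hdisj hu hx₂, hdisj hv hx₂]
  · obtain ⟨hu, hv⟩ := mem_of_isChain_ne (hw.infix (List.suffix_append _ _).isInfix) hu₂ hlen
    rcases hu₁ x₁ hx₁ with rfl | rfl
    exacts [hdisj hx₁ hu, hdisj hx₁ hv]

lemma length_append_le_two {u v : ℕ} {w₁ w₂ : List ℕ} (hw : (w₁ ++ w₂).IsChain (· ≠ ·))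
    (huv : ∀ x ∈ w₁ ++ w₂, x = u ∨ x = v) (hdisj : w₁.Disjoint w₂) (hnd₁ : w₁ = [] → w₂.Nodup)
    (hnd₂ : w₂ = [] → w₁.Nodup) : (w₁ ++ w₂).length ≤ 2 := by
  rcases eq_or_ne w₁ [] with rfl | h₁
  · simpa using length_le_two_of_nodup (hnd₁ rfl) (by simpa using huv)
  rcases eq_or_ne w₂ [] with rfl | h₂
  · simpa using length_le_two_of_nodup (hnd₂ rfl) (by simpa using huv)
  have := length_le_one_of_disjoint hw huv hdisj h₁ h₂
  rw [List.length_append]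
  omega

/-- A stretch of occurrences, each tagged `true` if it is meant to be the first occurrence of its
symbol and `false` if it is meant to be the last one. -/
abbrev Run := List (Bool × ℕ)

def symbols (r : Run) : List ℕ := r.map Prod.snd

def firsts (r : Run) : List ℕ := (r.filter Prod.fst).map Prod.snd

def lasts (r : Run) : List ℕ := (r.filter (!·.1)).map Prod.snd

@[simp] lemma firsts_cons (b : Bool) (x : ℕ) (r : Run) :
    firsts ((b, x) :: r) = if b then x :: firsts r else firsts r := by
  cases b <;> simp [firsts]

@[simp] lemma lasts_cons (b : Bool) (x : ℕ) (r : Run) :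
    lasts ((b, x) :: r) = if b then lasts r else x :: lasts r := by
  cases b <;> simp [lasts]

lemma firsts_sublist_symbols (r : Run) : (firsts r).Sublist (symbols r) :=
  (List.filter_sublist).map _

lemma lasts_sublist_symbols (r : Run) : (lasts r).Sublist (symbols r) :=
  (List.filter_sublist).map _

lemma firsts_append_lasts_perm (r : Run) : (firsts r ++ lasts r).Perm (symbols r) := by
  simpa [firsts, lasts, symbols] using (List.filter_append_perm Prod.fst r).map Prod.snd

def IsRun (pre post : List ℕ) (r : Run) : Prop :=
  (firsts r).Nodup ∧ (lasts r).Nodup ∧ (firsts r).Disjoint pre ∧ (lasts r).Disjoint post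

lemma IsRun.nil (pre post : List ℕ) : IsRun pre post [] := by
  simp [IsRun, firsts, lasts]

lemma IsRun.cons_first {pre post : List ℕ} {x : ℕ} {r : Run} (hx : x ∉ pre)
    (hr : IsRun (pre ++ [x]) post r) : IsRun pre post ((true, x) :: r) := by
  obtain ⟨hF, hL, hFpre, hLpost⟩ := hr
  rw [List.disjoint_append_right] at hFpre
  simp only [IsRun, firsts_cons, lasts_cons, if_true, List.nodup_cons, List.disjoint_cons_left]
  exact ⟨⟨fun h => hFpre.2 h (List.mem_singleton_self x), hF⟩, hL, ⟨hx, hFpre.1⟩, hLpost⟩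

lemma IsRun.cons_last {pre post : List ℕ} {x : ℕ} {r : Run} (hx : x ∉ symbols r ++ post)
    (hr : IsRun (pre ++ [x]) post r) : IsRun pre post ((false, x) :: r) := by
  obtain ⟨hF, hL, hFpre, hLpost⟩ := hr
  rw [List.disjoint_append_right] at hFpre
  rw [List.mem_append, not_or] at hx
  simp only [IsRun, firsts_cons, lasts_cons, Bool.false_eq_true, if_false, List.nodup_cons,
    List.disjoint_cons_left]
  exact ⟨hF, ⟨fun h => hx.1 ((lasts_sublist_symbols r).subset h), hL⟩, hFpre.1, hx.2, hLpost⟩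

/-- An alternation that uses both parts has at most two letters on each side of the cut: each part
is repetition-free and disjoint from the context on its far side, so `s + 2 ≤ 4`. -/
lemma IsDS.firsts_append_lasts {s : ℕ} (hs : 3 ≤ s) {A B : List ℕ} {r : Run} (hr : IsRun A B r)
    (h : IsDS s (A ++ symbols r ++ B)) : IsDS s (A ++ firsts r ++ lasts r ++ B) := by
  obtain ⟨hFnd, hLnd, hFA, hLB⟩ := hr
  intro u v huv hsub
  have hw := altList_isChain huv (s + 2)
  have huv' : ∀ x ∈ altList (s + 2) u v, x = u ∨ x = v := fun x hx => mem_altList hx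
  obtain ⟨w, t₄, hw₄, hsub, h₄⟩ := List.sublist_append_iff.1 hsub
  obtain ⟨w, t₃, hw₃, hsub, h₃⟩ := List.sublist_append_iff.1 hsub
  obtain ⟨t₁, t₂, rfl, h₁, h₂⟩ := List.sublist_append_iff.1 hsub
  subst hw₃
  rw [hw₄] at hw huv'
  rcases eq_or_ne t₂ [] with rfl | ht₂
  · refine h u v huv (hw₄ ▸ ?_)
    simpa using (h₁.append (h₃.trans (lasts_sublist_symbols r))).append h₄
  rcases eq_or_ne t₃ [] with rfl | ht₃
  · refine h u v huv (hw₄ ▸ ?_)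
    simpa using (h₁.append (h₂.trans (firsts_sublist_symbols r))).append h₄
  have h₁₂ : (t₁ ++ t₂).length ≤ 2 :=
    length_append_le_two
      (hw.infix (by simpa using (List.prefix_append (t₁ ++ t₂) (t₃ ++ t₄)).isInfix))
      (fun x hx => huv' x (by simp at hx ⊢; tauto))
      (fun x hx₁ hx₂ => hFA (h₂.subset hx₂) (h₁.subset hx₁)) (fun _ => h₂.nodup hFnd) (absurd · ht₂)
  have h₃₄ : (t₃ ++ t₄).length ≤ 2 :=
    length_append_le_two (hw.infix (by simpa using (List.suffix_append (t₁ ++ t₂) _).isInfix))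
      (fun x hx => huv' x (by simp at hx ⊢; tauto))
      (fun x hx₃ hx₄ => hLB (h₃.subset hx₃) (h₄.subset hx₄)) (absurd · ht₃) (fun _ => h₃.nodup hLnd)
  have := congrArg List.length hw₄
  simp only [altList_length, List.length_append] at this h₁₂ h₃₄
  omega

/-- The first letter of `V` is a middle occurrence in `U ++ V`: neither the first nor the last one
of its symbol. -/
def StartsWithMiddle (U V : List ℕ) : Prop := ∃ x t, V = x :: t ∧ x ∈ U ∧ x ∈ t

/-- Greedy piece: take middle occurrences while the symbols used, together with `A`, number at
most `q`. -/
lemma exists_piece (q : ℕ) (V U : List ℕ) (A : Finset ℕ) (hA : A.card ≤ q) :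
    ∃ p V', V = p ++ V' ∧ (∀ x ∈ p, x ∈ U ∧ x ∈ V') ∧ (A ∪ p.toFinset).card ≤ q ∧
      (StartsWithMiddle (U ++ p) V' → (A ∪ p.toFinset).card = q) := by
  induction V generalizing U A with
  | nil => exact ⟨[], [], rfl, by simp, by simpa, by simp [StartsWithMiddle]⟩
  | cons x t ih =>
    by_cases hx : (x ∈ U ∧ x ∈ t) ∧ (x ∈ A ∨ A.card < q)
    · have hA' : (insert x A).card ≤ q := by
        rcases hx.2 with hxA | hlt
        · rwa [Finset.insert_eq_self.2 hxA]
        · exact (Finset.card_insert_le _ _).trans hlt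
      obtain ⟨p, V', rfl, hmid, hcard, hfull⟩ := ih (U ++ [x]) (insert x A) hA'
      have hset : A ∪ (x :: p).toFinset = insert x A ∪ p.toFinset := by
        rw [List.toFinset_cons, Finset.union_insert, Finset.insert_union]
      refine ⟨x :: p, V', rfl, ?_, hset ▸ hcard, by simpa [hset] using hfull⟩
      intro y hy
      rcases List.mem_cons.1 hy with rfl | hy
      · refine ⟨hx.1.1, ?_⟩
        rcases List.mem_append.1 hx.1.2 with h | h
        exacts [(hmid y h).2, h]
      · obtain ⟨hyU, hyV⟩ := hmid y hy
        rcases List.mem_append.1 hyU with h | h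
        · exact ⟨h, hyV⟩
        · exact ⟨(List.mem_singleton.1 h) ▸ hx.1.1, hyV⟩
    · refine ⟨[], x :: t, rfl, by simp, by simpa, ?_⟩
      rintro ⟨y, t', heq, hyU, hyt⟩
      obtain ⟨rfl, rfl⟩ := List.cons.inj heq
      have hq : q ≤ A.card := by
        by_contra! hlt
        exact hx ⟨⟨by simpa using hyU, hyt⟩, Or.inr hlt⟩
      simpa using le_antisymm hA hq

/-- Greedy run: take occurrences while they are not middle ones. -/
lemma exists_run (V U : List ℕ) :
    ∃ r V', V = symbols r ++ V' ∧ IsRun U V' r ∧ (r = [] → V = [] ∨ StartsWithMiddle U V) := by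
  induction V generalizing U with
  | nil => exact ⟨[], [], rfl, IsRun.nil _ _, fun _ => Or.inl rfl⟩
  | cons x t ih =>
    by_cases hx : x ∈ U ∧ x ∈ t
    · exact ⟨[], x :: t, rfl, IsRun.nil _ _, fun _ => Or.inr ⟨x, t, rfl, hx⟩⟩
    obtain ⟨r, V', rfl, hr, -⟩ := ih (U ++ [x])
    by_cases hxU : x ∈ U
    · exact ⟨(false, x) :: r, V', rfl, hr.cons_last fun h => hx ⟨hxU, h⟩, by simp⟩
    · exact ⟨(true, x) :: r, V', rfl, hr.cons_first hxU, by simp⟩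

/-- A segmentation lists pairs (piece, run), the pieces made of middle occurrences. -/
def joinSegs (segs : List (List ℕ × Run)) : List ℕ := segs.flatMap fun pr => pr.1 ++ symbols pr.2

def IsSegmentation : List ℕ → List (List ℕ × Run) → Prop
  | _, [] => True
  | pre, (p, r) :: rest =>
      (∀ x ∈ p, x ∈ pre ∧ x ∈ symbols r ++ joinSegs rest) ∧
      IsRun (pre ++ p) (joinSegs rest) r ∧ IsSegmentation (pre ++ p ++ symbols r) rest

@[simp] lemma joinSegs_nil : joinSegs [] = [] := rfl

@[simp] lemma joinSegs_cons (p : List ℕ) (r : Run) (rest : List (List ℕ × Run)) :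
    joinSegs ((p, r) :: rest) = p ++ symbols r ++ joinSegs rest := by
  simp [joinSegs]

lemma length_joinSegs (segs : List (List ℕ × Run)) :
    (joinSegs segs).length = (segs.map fun pr => pr.1.length + pr.2.length).sum := by
  simp [joinSegs, symbols]

/-- Alternate greedy pieces and greedy runs. A piece that is not followed by a nonempty run
stopped because it reached `q` symbols. -/
lemma exists_segmentation {q : ℕ} (hq : 1 ≤ q) (V U : List ℕ) :
    ∃ segs, V = joinSegs segs ∧ IsSegmentation U segs ∧
      (∀ pr ∈ segs, pr.1.toFinset.card ≤ q) ∧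
      (∀ pr ∈ segs, pr.2 = [] → pr.1.toFinset.card = q) := by
  induction hV : V.length using Nat.strong_induction_on generalizing V U with
  | _ N ih =>
    rcases eq_or_ne V [] with rfl | hVne
    · exact ⟨[], rfl, trivial, by simp, by simp⟩
    obtain ⟨p, V₁, rfl, hmid, hcard, hfull⟩ := exists_piece q V U ∅ (by simp)
    obtain ⟨r, V₂, rfl, hr, hrnil⟩ := exists_run V₁ (U ++ p)
    rw [Finset.empty_union] at hcard hfull
    have hpfull : r = [] → p.toFinset.card = q := by
      rintro rfl
      rcases hrnil rfl with h | h
      · obtain rfl : p = [] :=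
          List.eq_nil_iff_forall_not_mem.2 fun x hx => by simpa [h] using hmid x hx
        simp_all
      · exact hfull h
    have hshorter : V₂.length < N := by
      have hprog : 0 < p.length + r.length := by
        by_contra! h
        obtain ⟨rfl, rfl⟩ : p = [] ∧ r = [] := by simpa using h
        have := hpfull rfl
        simp at this
        omega
      simp only [← hV, symbols, List.length_append, List.length_map]
      omega
    obtain ⟨segs, rfl, hseg, hcards, hfulls⟩ := ih _ hshorter V₂ (U ++ p ++ symbols r) rfl
    refine ⟨(p, r) :: segs, by simp, ⟨hmid, hr, hseg⟩, ?_, ?_⟩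
    · exact List.forall_mem_cons.2 ⟨hcard, hcards⟩
    · exact List.forall_mem_cons.2 ⟨hpfull, hfulls⟩

lemma IsSegmentation.exists_middle {pre : List ℕ} {segs : List (List ℕ × Run)}
    (h : IsSegmentation pre segs) :
    ∀ pr ∈ segs, ∃ U W, pre ++ joinSegs segs = U ++ pr.1 ++ W ∧ ∀ x ∈ pr.1, x ∈ U ∧ x ∈ W := by
  induction segs generalizing pre with
  | nil => simp
  | cons pr rest ih =>
    obtain ⟨p, r⟩ := pr
    obtain ⟨hmid, -, hrest⟩ := h
    refine List.forall_mem_cons.2 ⟨⟨pre, symbols r ++ joinSegs rest, by simp, hmid⟩, ?_⟩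
    intro pr hpr
    simpa using ih hrest pr hpr

def witness (segs : List (List ℕ × Run)) : List ℕ :=
  segs.flatMap fun pr => pr.1.dedup ++ firsts pr.2 ++ lasts pr.2

lemma mem_joinSegs_of_mem_witness {segs : List (List ℕ × Run)} {x : ℕ} (hx : x ∈ witness segs) :
    x ∈ joinSegs segs := by
  simp only [witness, joinSegs, List.mem_flatMap, List.mem_append, List.mem_dedup] at hx ⊢
  obtain ⟨pr, hpr, hx⟩ := hx
  refine ⟨pr, hpr, ?_⟩
  rcases hx with (hx | hx) | hx
  exacts [Or.inl hx, Or.inr ((firsts_sublist_symbols _).subset hx),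
    Or.inr ((lasts_sublist_symbols _).subset hx)]

lemma IsSegmentation.isDS_witness {s : ℕ} (hs : 3 ≤ s) {pre : List ℕ}
    {segs : List (List ℕ × Run)} (h : IsSegmentation pre segs)
    (hds : IsDS s (pre ++ joinSegs segs)) :
    IsDS s (pre ++ witness segs) := by
  induction segs generalizing pre with
  | nil => simpa [witness] using hds
  | cons pr rest ih =>
    obtain ⟨p, r⟩ := pr
    obtain ⟨-, hr, hrest⟩ := h
    have hrest := ih hrest (by simpa using hds)
    have hr' : IsRun (pre ++ p) (witness rest) r :=
      ⟨hr.1, hr.2.1, hr.2.2.1, fun x hx hx' => hr.2.2.2 hx (mem_joinSegs_of_mem_witness hx')⟩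
    have := IsDS.firsts_append_lasts hs hr' (by simpa using hrest)
    refine IsDS.sublist this ?_
    simpa [witness] using
      ((List.dedup_sublist p).append_right (firsts r ++ lasts r ++ witness rest)).append_left pre

lemma length_witness (segs : List (List ℕ × Run)) :
    (witness segs).length = (segs.map fun pr => pr.1.toFinset.card + pr.2.length).sum := by
  rw [witness, List.length_flatMap]
  congr 1
  refine List.map_congr_left fun pr _ => ?_
  rw [List.append_assoc, List.length_append, (firsts_append_lasts_perm pr.2).length_eq,
    List.card_toFinset, symbols, List.length_map]

lemma length_joinSegs_le_mul_length_witness {M : ℕ} (hM : 1 ≤ M) {segs : List (List ℕ × Run)}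
    (hp : ∀ pr ∈ segs, pr.1.length ≤ M * pr.1.toFinset.card) :
    (joinSegs segs).length ≤ M * (witness segs).length := by
  rw [length_joinSegs, length_witness, ← List.sum_map_mul_left]
  refine List.sum_le_sum fun pr hpr => ?_
  have := hp pr hpr
  nlinarith

def blocks : List ℕ → List (List ℕ × Run) → List (List ℕ)
  | cur, [] => [cur]
  | cur, (p, r) :: rest => (cur ++ p.dedup ++ firsts r) :: blocks (lasts r) rest

lemma length_blocks (cur : List ℕ) (segs : List (List ℕ × Run)) :
    (blocks cur segs).length = segs.length + 1 := by
  induction segs generalizing cur with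
  | nil => rfl
  | cons pr rest ih => simp [blocks, ih]

lemma flatten_blocks (cur : List ℕ) (segs : List (List ℕ × Run)) :
    (blocks cur segs).flatten = cur ++ witness segs := by
  induction segs generalizing cur with
  | nil => simp [blocks, witness]
  | cons pr rest ih => simp [blocks, ih, witness]

lemma IsSegmentation.nodup_of_mem_blocks {pre cur : List ℕ} {segs : List (List ℕ × Run)}
    (h : IsSegmentation pre segs) (hcur : cur.Nodup) (hdisj : cur.Disjoint (joinSegs segs)) :
    ∀ B ∈ blocks cur segs, B.Nodup := by
  induction segs generalizing pre cur with
  | nil => simpa [blocks] using hcur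
  | cons pr rest ih =>
    obtain ⟨p, r⟩ := pr
    obtain ⟨hmid, ⟨hF, hL, hFpre, hLpost⟩, hrest⟩ := h
    refine List.forall_mem_cons.2 ⟨?_, ih hrest hL hLpost⟩
    refine (hcur.append (List.nodup_dedup p) ?_).append hF ?_
    · exact fun x hx hxp => hdisj hx (by simp [List.mem_dedup.1 hxp])
    · intro x hx hxF
      rcases List.mem_append.1 hx with hx | hx
      · exact hdisj hx (by simp [(firsts_sublist_symbols r).subset hxF])
      · exact hFpre hxF (by simp [List.mem_dedup.1 hx])

lemma length_le_card_of_nodup {l m : List ℕ} (hnd : l.Nodup) (h : ∀ x ∈ l, x ∈ m) :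
    l.length ≤ m.toFinset.card := by
  rw [← List.toFinset_card_of_nodup hnd]
  exact Finset.card_le_card fun x hx => by simpa using h x (by simpa using hx)

lemma IsSegmentation.nodup_flatMap_firsts {pre : List ℕ} {segs : List (List ℕ × Run)}
    (h : IsSegmentation pre segs) :
    (segs.flatMap fun pr => firsts pr.2).Nodup ∧
      (segs.flatMap fun pr => firsts pr.2).Disjoint pre := by
  induction segs generalizing pre with
  | nil => simp
  | cons pr rest ih =>
    obtain ⟨p, r⟩ := pr
    obtain ⟨-, ⟨hF, -, hFpre, -⟩, hrest⟩ := h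
    obtain ⟨ihnd, ihdisj⟩ := ih hrest
    simp only [List.flatMap_cons]
    refine ⟨hF.append ihnd fun x hx hx' => ihdisj hx' ?_, fun x hx hx' => ?_⟩
    · simp [(firsts_sublist_symbols r).subset hx]
    · rcases List.mem_append.1 hx with hx | hx
      exacts [hFpre hx (List.mem_append_left _ hx'), ihdisj hx (by simp [hx'])]

lemma IsSegmentation.nodup_flatMap_lasts {pre : List ℕ} {segs : List (List ℕ × Run)}
    (h : IsSegmentation pre segs) : (segs.flatMap fun pr => lasts pr.2).Nodup := by
  induction segs generalizing pre with
  | nil => simp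
  | cons pr rest ih =>
    obtain ⟨p, r⟩ := pr
    obtain ⟨-, ⟨-, hL, -, hLpost⟩, hrest⟩ := h
    refine hL.append (ih hrest) fun x hx hx' => hLpost hx ?_
    obtain ⟨pr, hpr, hx'⟩ := List.mem_flatMap.1 hx'
    exact List.mem_flatMap.2 ⟨pr, hpr, by simp [(lasts_sublist_symbols _).subset hx']⟩

lemma mem_joinSegs_of_mem_flatMap {segs : List (List ℕ × Run)} {f : Run → List ℕ}
    (hf : ∀ r, f r ⊆ symbols r) {x : ℕ} (hx : x ∈ segs.flatMap fun pr => f pr.2) :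
    x ∈ joinSegs segs := by
  obtain ⟨pr, hpr, hx⟩ := List.mem_flatMap.1 hx
  exact List.mem_flatMap.2 ⟨pr, hpr, by simp [hf _ hx]⟩

/-- Each symbol has one first and one last occurrence, so the runs hold at most two occurrences
per symbol. -/
lemma IsSegmentation.sum_length_runs_le {pre : List ℕ} {segs : List (List ℕ × Run)}
    (h : IsSegmentation pre segs) :
    (segs.map fun pr => pr.2.length).sum ≤ 2 * (joinSegs segs).toFinset.card := by
  have hsum : (segs.map fun pr => pr.2.length).sum =
      (segs.flatMap fun pr => firsts pr.2).length + (segs.flatMap fun pr => lasts pr.2).length := by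
    simp only [List.length_flatMap, ← List.sum_map_add, ← List.length_append,
      (firsts_append_lasts_perm _).length_eq, symbols, List.length_map]
  rw [hsum, two_mul]
  exact Nat.add_le_add
    (length_le_card_of_nodup h.nodup_flatMap_firsts.1
      fun _ => mem_joinSegs_of_mem_flatMap fun r => (firsts_sublist_symbols r).subset)
    (length_le_card_of_nodup h.nodup_flatMap_lasts
      fun _ => mem_joinSegs_of_mem_flatMap fun r => (lasts_sublist_symbols r).subset)

lemma length_le_countP_add_sum {α : Type*} (l : List α) (g : α → ℕ) :
    l.length ≤ l.countP (fun a => g a = 0) + (l.map g).sum := by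
  induction l with
  | nil => simp
  | cons a l ih => by_cases h : g a = 0 <;> simp [h] <;> omega

lemma mul_countP_le_sum {α : Type*} {l : List α} {P : α → Bool} {g : α → ℕ} {q : ℕ}
    (h : ∀ a ∈ l, P a → q ≤ g a) : q * l.countP P ≤ (l.map g).sum := by
  induction l with
  | nil => simp
  | cons a l ih =>
    have ih := ih fun b hb => h b (List.mem_cons_of_mem _ hb)
    by_cases hP : P a
    · have := h a List.mem_cons_self hP
      simp [hP, Nat.mul_add]
      omega
    · simp [hP]
      omega

/-- `P` pieces, `f` of them full (with `q` symbols), each other one followed by one of the `c` run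
occurrences. -/
lemma add_one_le_three_mul_sub_one {P f c q n : ℕ} (hq : 1 ≤ q) (hn : 2 ≤ n) (hP : P ≤ f + c)
    (hf : q * f + c ≤ q * n) (hc : c ≤ 2 * n) (hfull : n < q → f = 0) : P + 1 ≤ 3 * n - 1 := by
  rcases le_or_gt q n with hqn | hqn
  · obtain ⟨k, rfl⟩ := Nat.exists_eq_add_of_le' hq
    have hkc : k * c ≤ k * (2 * n) := Nat.mul_le_mul_left k hc
    have : (k + 1) * (P + 2) ≤ (k + 1) * (3 * n) := by nlinarith
    have := Nat.le_of_mul_le_mul_left this (Nat.succ_pos k)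
    omega
  · have := hfull hqn
    omega

lemma IsSegmentation.length_add_one_le {pre : List ℕ} {segs : List (List ℕ × Run)}
    {q n : ℕ} (h : IsSegmentation pre segs) (hq : 1 ≤ q) (hn : 2 ≤ n)
    (hcard : (joinSegs segs).toFinset.card ≤ n) (hlen : (joinSegs segs).length ≤ q * n)
    (hfull : ∀ pr ∈ segs, pr.2 = [] → pr.1.toFinset.card = q) :
    segs.length + 1 ≤ 3 * n - 1 := by
  set c := (segs.map fun pr => pr.2.length).sum
  set f := segs.countP fun pr => pr.2.length = 0
  have hP : segs.length ≤ f + c := length_le_countP_add_sum _ _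
  have hf : q * f ≤ (segs.map fun pr => pr.1.toFinset.card).sum :=
    mul_countP_le_sum fun pr hpr hr => (hfull pr hpr (by simpa using hr)).ge
  have hNc : (segs.map fun pr => pr.1.toFinset.card).sum + c ≤ (joinSegs segs).length := by
    rw [length_joinSegs, ← List.sum_map_add]
    exact List.sum_le_sum fun pr _ => Nat.add_le_add_right (List.toFinset_card_le _) _
  have hf0 : n < q → f = 0 := fun hqn => List.countP_eq_zero.2 fun pr hpr hr => by
    have hsub : pr.1.toFinset ⊆ (joinSegs segs).toFinset := fun x hx => List.mem_toFinset.2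
      (List.mem_flatMap.2 ⟨pr, hpr, List.mem_append_left _ (List.mem_toFinset.1 hx)⟩)
    have := hfull pr hpr (by simpa using hr)
    have := (Finset.card_le_card hsub).trans hcard
    omega
  exact add_one_le_three_mul_sub_one hq hn hP (by omega) (h.sum_length_runs_le.trans (by omega)) hf0

theorem exists_blocked_of_isDS {s q M n : ℕ} (hs : 3 ≤ s) (hq : 1 ≤ q) (hM : 1 ≤ M)
    (hpiece : ∀ p : List ℕ, IsDS (s - 2) p → Sparse2 p → p.toFinset.card ≤ q →
      p.length ≤ M * p.toFinset.card)
    {S : List ℕ} (hds : IsDS s S) (hsp : Sparse2 S) (hn : S.toFinset.card ≤ n)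
    (hS : S.length ≤ q * n) :
    ∃ W, IsDS s W ∧ W.toFinset.card ≤ n ∧ Blocked (3 * n - 1) W ∧ S.length ≤ M * W.length := by
  by_cases hsmall : S.length ≤ 3 * n - 1
  · exact ⟨S, hds, hn, Blocked.mono (blocked_length S) hsmall, Nat.le_mul_of_pos_left _ hM⟩
  have hn2 : 2 ≤ n := by
    by_contra!
    have := Sparse2.length_le_card hsp (by omega)
    omega
  obtain ⟨segs, rfl, hseg, hcard, hfull⟩ := exists_segmentation hq S []
  have hpieces : ∀ pr ∈ segs, pr.1.length ≤ M * pr.1.toFinset.card := fun pr hpr => by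
    obtain ⟨U, W, hUW, hmid⟩ := hseg.exists_middle pr hpr
    rw [List.nil_append] at hUW
    exact hpiece pr.1 (IsDS.of_mem_left_right (by omega) (hUW ▸ hds) hmid)
      (hsp.infix ⟨U, W, hUW.symm⟩) (hcard pr hpr)
  have hblocks : Blocked (3 * n - 1) (witness segs) := by
    refine ⟨blocks [] segs, ?_, hseg.nodup_of_mem_blocks List.nodup_nil (by simp), ?_⟩
    · rw [length_blocks]
      exact hseg.length_add_one_le hq hn2 hn hS hfull
    · rw [flatten_blocks, List.nil_append]
  refine ⟨witness segs, by simpa using hseg.isDS_witness hs (by simpa using hds), ?_, hblocks,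
    length_joinSegs_le_mul_length_witness hM hpieces⟩
  exact le_trans (Finset.card_le_card fun x hx => List.mem_toFinset.2
    (mem_joinSegs_of_mem_witness (List.mem_toFinset.1 hx))) hn

end DavenportSchinzel

open DavenportSchinzel

theorem stmt7_general (s : ℕ) (hs : 3 ≤ s) (γs γs2 : ℕ → ℕ)
    (hγs2 : Monotone γs2)
    (h1 : ∀ n : ℕ, 1 ≤ n → lamS s n ≤ γs n * n)
    (h2 : ∀ n : ℕ, 1 ≤ n → lamS (s - 2) n ≤ γs2 n * n) :
    ∀ n : ℕ, 1 ≤ n → lamS s n ≤ γs2 (γs n) * lamB s n (3 * n - 1) := by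
  intro n hn
  have hq : 1 ≤ γs n := Nat.pos_of_mul_pos_right ((one_le_lamS s hn).trans (h1 n hn))
  have hM : 1 ≤ γs2 (γs n) :=
    ((one_le_lamS (s - 2) le_rfl).trans ((h2 1 le_rfl).trans_eq (mul_one _))).trans (hγs2 hq)
  have hpiece (p : List ℕ) (hds : IsDS (s - 2) p) (hsp : Sparse2 p)
      (hp : p.toFinset.card ≤ γs n) : p.length ≤ γs2 (γs n) * p.toFinset.card := by
    rcases Nat.eq_zero_or_pos p.toFinset.card with h0 | hpos
    · simp_all
    calc p.length ≤ lamS (s - 2) p.toFinset.card := length_le_lamS hds hsp le_rfl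
      _ ≤ γs2 p.toFinset.card * p.toFinset.card := h2 _ hpos
      _ ≤ γs2 (γs n) * p.toFinset.card := Nat.mul_le_mul_right _ (hγs2 hp)
  refine lamS_le fun S hds hsp hcard => ?_
  obtain ⟨W, hWds, hWcard, hWblocked, hSW⟩ := exists_blocked_of_isDS hs hq hM hpiece hds hsp hcard
    ((length_le_lamS hds hsp hcard).trans (h1 n hn))
  exact hSW.trans (Nat.mul_le_mul_left _ (length_le_lamB hWds hWcard hWblocked))

/-- For `s ≥ 3` and nondecreasing `γ_s, γ_{s−2}` with `λ_s(n) ≤ γ_s(n)·n` and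
`λ_{s−2}(n) ≤ γ_{s−2}(n)·n` for all `n ≥ 1`, we have
`λ_s(n) ≤ γ_{s−2}(γ_s(n))·λ_s(n, 3n−1)` for all `n ≥ 1`. -/
theorem stmt7 (s : ℕ) (hs : 3 ≤ s) (γs γs2 : ℕ → ℕ)
    (hγs : Monotone γs) (hγs2 : Monotone γs2)
    (h1 : ∀ n : ℕ, 1 ≤ n → lamS s n ≤ γs n * n)
    (h2 : ∀ n : ℕ, 1 ≤ n → lamS (s - 2) n ≤ γs2 n * n) :
    ∀ n : ℕ, 1 ≤ n → lamS s n ≤ γs2 (γs n) * lamB s n (3 * n - 1) :=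
  stmt7_general s hs γs γs2 hγs2 h1 h2
end

section
/- For all i, j ≥ 1: 3^i·2^{binom(i+1,2)}·N_5(i,j) ≥ j·B_5(i,j), where binom denotes the binomial coefficient (i.e., N_5(i,j) ≥ j·B_5(i,j)/ξ(i) with ξ(i) = 3^i·2^{binom(i+1,2)}). -/
/-- Block counts `B₄(i,j)` of the order-4 construction (junk when an index is 0):
`B₄(1,j) = 2`, `B₄(i,1) = 2^i`, and `B₄(i,j) = 2·y·B₄(i−1,y)` with `y = B₄(i,j−1)`. -/
def B4 : ℕ → ℕ → ℕ
  | 0, _ => 0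
  | 1, _ => 2
  | _+2, 0 => 0
  | i+2, 1 => 2 ^ (i + 2)
  | i+2, j+2 => 2 * B4 (i+2) (j+1) * B4 (i+1) (B4 (i+2) (j+1))
  termination_by i j => (i, j)

/-- Alphabet sizes `N₄(i,j)`: `N₄(1,j) = j`, `N₄(i,1) = 1`, and
`N₄(i,j) = N₄(i−1,y) + 2·B₄(i−1,y)·N₄(i,j−1)` with `y = B₄(i,j−1)`. -/
def N4 : ℕ → ℕ → ℕ
  | 0, _ => 0
  | 1, j => j
  | _+2, 0 => 0
  | _+2, 1 => 1
  | i+2, j+2 =>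
      N4 (i+1) (B4 (i+2) (j+1)) + 2 * B4 (i+1) (B4 (i+2) (j+1)) * N4 (i+2) (j+1)
  termination_by i j => (i, j)

/-- Block counts `B₅(i,j)` of the order-5 construction: `B₅(1,j) = 2`,
`B₅(i,1) = (2i−3)·2^i + 4`, and `B₅(i,j) = B₅(i−1, N₄(i,z))·w·z` with
`z = B₅(i,j−1)` and `w = 2·B₄(i,z) + B₄(i,z)/2^{i−1}`. -/
def B5 : ℕ → ℕ → ℕ
  | 0, _ => 0
  | 1, _ => 2
  | _+2, 0 => 0
  | i+2, 1 => (2 * (i + 2) - 3) * 2 ^ (i + 2) + 4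
  | i+2, j+2 =>
      B5 (i+1) (N4 (i+2) (B5 (i+2) (j+1))) *
        (2 * B4 (i+2) (B5 (i+2) (j+1)) + B4 (i+2) (B5 (i+2) (j+1)) / 2 ^ (i+1)) *
        B5 (i+2) (j+1)
  termination_by i j => (i, j)

/-- Alphabet sizes `N₅(i,j)`: `N₅(1,j) = j`, `N₅(i,1) = 1`, and
`N₅(i,j) = N₅(i−1, N₄(i,z)) + B₅(i−1, N₄(i,z))·w·N₅(i,j−1)` with
`z = B₅(i,j−1)` and `w = 2·B₄(i,z) + B₄(i,z)/2^{i−1}`. -/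
def N5 : ℕ → ℕ → ℕ
  | 0, _ => 0
  | 1, j => j
  | _+2, 0 => 0
  | _+2, 1 => 1
  | i+2, j+2 =>
      N5 (i+1) (N4 (i+2) (B5 (i+2) (j+1))) +
      B5 (i+1) (N4 (i+2) (B5 (i+2) (j+1))) *
        (2 * B4 (i+2) (B5 (i+2) (j+1)) + B4 (i+2) (B5 (i+2) (j+1)) / 2 ^ (i+1)) *
        N5 (i+2) (j+1)
  termination_by i j => (i, j)

/-!
Both bounds go by induction on `i` and, inside it, on `j`; in each recursion step the two summands
of `N(i,j)` dominate the two parts of `j·B(i,j) = B(i,j) + (j−1)·B(i,j)`, the first one by the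
bound at level `i−1` and the second by the bound at `(i, j−1)`. For `B₄` the step from `i−1` to `i`
costs a factor `2`. For `B₅` the weight `w = 2·B₄(i,z) + B₄(i,z)/2^{i−1}` is at most `3·B₄(i,z)`
and `z·B₄(i,z) ≤ 2^i·N₄(i,z)` by the order-4 bound, so the step costs `3·2^i = ξ(i)/ξ(i−1)`.
-/

theorem mul_B4_le_two_pow_mul_N4 : ∀ i j, j * B4 i j ≤ 2 ^ i * N4 i j
  | 0, j => by simp [B4]
  | 1, j => by simp [B4, N4, mul_comm]
  | i + 2, 0 => by simp
  | i + 2, 1 => by simp [B4, N4]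
  | i + 2, j + 2 => by
    rw [B4, N4]
    set y := B4 (i + 2) (j + 1)
    have hy : y * B4 (i + 1) y ≤ 2 ^ (i + 1) * N4 (i + 1) y :=
      mul_B4_le_two_pow_mul_N4 (i + 1) y
    have hj : (j + 1) * y ≤ 2 ^ (i + 2) * N4 (i + 2) (j + 1) :=
      mul_B4_le_two_pow_mul_N4 (i + 2) (j + 1)
    calc (j + 2) * (2 * y * B4 (i + 1) y)
        = 2 * (y * B4 (i + 1) y) + 2 * B4 (i + 1) y * ((j + 1) * y) := by ring
      _ ≤ 2 * (2 ^ (i + 1) * N4 (i + 1) y)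
            + 2 * B4 (i + 1) y * (2 ^ (i + 2) * N4 (i + 2) (j + 1)) := by gcongr
      _ = 2 ^ (i + 2) * (N4 (i + 1) y + 2 * B4 (i + 1) y * N4 (i + 2) (j + 1)) := by ring
termination_by i j => (i, j)

def xi (i : ℕ) : ℕ := 3 ^ i * 2 ^ (i + 1).choose 2

theorem xi_succ (i : ℕ) : xi (i + 1) = 3 * 2 ^ (i + 1) * xi i := by
  rw [xi, xi, Nat.choose_succ_succ' (i + 1) 1, Nat.choose_one_right, pow_add, pow_succ 3]
  ring

theorem B5_one_le_xi : ∀ i, B5 i 1 ≤ xi i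
  | 0 => by simp [B5]
  | 1 => by simp [B5, xi]
  | i + 2 => by
    have hxi : 3 ^ (i + 1) ≤ xi (i + 1) := Nat.le_mul_of_pos_right _ (by positivity)
    have hpow3 : 2 * i + 2 ≤ 3 ^ (i + 2) := by
      have : i < 3 ^ i := Nat.lt_pow_self (by norm_num)
      rw [pow_add]; omega
    have hfour : 4 ≤ 2 ^ (i + 2) := by
      rw [pow_add]; have : 0 < 2 ^ i := by positivity
      omega
    rw [B5, xi_succ]
    calc (2 * (i + 2) - 3) * 2 ^ (i + 2) + 4 ≤ (2 * i + 2) * 2 ^ (i + 2) := by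
          rw [show 2 * (i + 2) - 3 = 2 * i + 1 by omega]; nlinarith
      _ ≤ 3 ^ (i + 2) * 2 ^ (i + 2) := by gcongr
      _ ≤ 3 * 2 ^ (i + 2) * xi (i + 1) := by rw [pow_succ' 3]; nlinarith

theorem mul_B5_le_xi_mul_N5 : ∀ i j, j * B5 i j ≤ xi i * N5 i j
  | 0, j => by simp [B5]
  | 1, j => by simp [B5, N5, xi, mul_comm]; omega
  | i + 2, 0 => by simp
  | i + 2, 1 => by simpa [N5] using B5_one_le_xi (i + 2)
  | i + 2, j + 2 => by
    rw [B5, N5]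
    set z := B5 (i + 2) (j + 1)
    set m := N4 (i + 2) z
    set A := B5 (i + 1) m
    set b := B4 (i + 2) z
    set w := 2 * b + b / 2 ^ (i + 1)
    have hw : w ≤ 3 * b := by have := Nat.div_le_self b (2 ^ (i + 1)); omega
    have hzb : z * b ≤ 2 ^ (i + 2) * m := mul_B4_le_two_pow_mul_N4 (i + 2) z
    have hA : m * A ≤ xi (i + 1) * N5 (i + 1) m := mul_B5_le_xi_mul_N5 (i + 1) m
    have hj : (j + 1) * z ≤ xi (i + 2) * N5 (i + 2) (j + 1) :=
      mul_B5_le_xi_mul_N5 (i + 2) (j + 1)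
    have hfirst : A * w * z ≤ xi (i + 2) * N5 (i + 1) m :=
      calc A * w * z ≤ A * (3 * b) * z := by gcongr
        _ = 3 * A * (z * b) := by ring
        _ ≤ 3 * A * (2 ^ (i + 2) * m) := by gcongr
        _ = 3 * 2 ^ (i + 2) * (m * A) := by ring
        _ ≤ 3 * 2 ^ (i + 2) * (xi (i + 1) * N5 (i + 1) m) := by gcongr
        _ = xi (i + 2) * N5 (i + 1) m := by rw [xi_succ (i + 1)]; ring
    calc (j + 2) * (A * w * z) = A * w * z + A * w * ((j + 1) * z) := by ring
      _ ≤ xi (i + 2) * N5 (i + 1) m + A * w * (xi (i + 2) * N5 (i + 2) (j + 1)) := by gcongr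
      _ = xi (i + 2) * (N5 (i + 1) m + A * w * N5 (i + 2) (j + 1)) := by ring
termination_by i j => (i, j)

theorem stmt16_general (i j : ℕ) :
    j * B5 i j ≤ 3 ^ i * 2 ^ Nat.choose (i + 1) 2 * N5 i j :=
  mul_B5_le_xi_mul_N5 i j

/-- For all `i, j ≥ 1`: `ξ(i)·N₅(i,j) ≥ j·B₅(i,j)` where `ξ(i) = 3^i·2^{C(i+1,2)}`. -/
theorem stmt16 (i j : ℕ) (hi : 1 ≤ i) (hj : 1 ≤ j) :
    j * B5 i j ≤ 3 ^ i * 2 ^ Nat.choose (i + 1) 2 * N5 i j :=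
  stmt16_general i j
end
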